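/- Let θ₂ ∈ (π/4, π/3] ∪ [2π/3, 3π/4), set f(θ₂) = √(1 - 8cos(2θ₂) - 8cos(4θ₂)), ρ₁(θ₂) = (1/(8√2))·(√(f(θ₂) - 3)/(cos θ₂ · cos(2θ₂)))·(f(θ₂) + 3 + 4cos(2θ₂)), and ρ₂(θ₂) = -√((f(θ₂) - 3)/2). Then real numbers R₁, R₂ satisfy the system 1 + 2cos(2θ₂) - R₂² = 2R₁R₂cos θ₂ and 2R₂cos θ₂ + R₁cos(2θ₂) = (1/2)R₁R₂² if and only if (R₁, R₂) = (ρ₁(θ₂), ρ₂(θ₂)) or (R₁, R₂) = (-ρ₁(θ₂), -ρ₂(θ₂)). (In particular 1 - 8cos(2θ₂) - 8cos(4θ₂) ≥ 9 on this range, so both square roots are real.) -/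

import Mathlib

/-!
Write `c = cos θ₂` and `k = cos 2θ₂ = 2c² - 1`. Multiplying the second equation by `4R₂c` and
substituting the first one eliminates `R₁`: every solution satisfies
`R₂⁴ + 3R₂² = -2k(1 + 2k)`. Since `x ↦ x⁴ + 3x²` is injective up to sign, `R₂ = ±ρ₂` for any one
solution `(ρ₁, ρ₂)`, and the first equation (or the second, when `R₂ = 0`) then determines `R₁`
as long as `c k ≠ 0`. On the given range `k ∈ [-1/2, 0)`, so `9 - 8k - 16k² ≥ 9`, and a direct
computation shows that the explicit `(ρ₁, ρ₂)` is a solution.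
-/

open Real Set

/-- The reduced period system, with `c = cos θ₂` and `k = cos 2θ₂`. -/
def ReducedPeriodSystem (c k R₁ R₂ : ℝ) : Prop :=
  1 + 2 * k - R₂ ^ 2 = 2 * R₁ * R₂ * c ∧ 2 * R₂ * c + R₁ * k = (1 / 2) * R₁ * R₂ ^ 2

theorem eq_or_eq_neg_of_pow_four_add_three_mul_sq_eq {x y : ℝ}
    (h : x ^ 4 + 3 * x ^ 2 = y ^ 4 + 3 * y ^ 2) : x = y ∨ x = -y := by
  have hfac : (x ^ 2 - y ^ 2) * (x ^ 2 + y ^ 2 + 3) = 0 := by linear_combination h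
  have hpos : x ^ 2 + y ^ 2 + 3 ≠ 0 := by positivity
  exact sq_eq_sq_iff_eq_or_eq_neg.mp (sub_eq_zero.mp ((mul_eq_zero.mp hfac).resolve_right hpos))

namespace ReducedPeriodSystem

variable {c k R₁ R₂ : ℝ}

theorem neg (h : ReducedPeriodSystem c k R₁ R₂) : ReducedPeriodSystem c k (-R₁) (-R₂) := by
  obtain ⟨h₁, h₂⟩ := h
  exact ⟨by linear_combination h₁, by linear_combination -h₂⟩

theorem resolvent (hck : k = 2 * c ^ 2 - 1) (h : ReducedPeriodSystem c k R₁ R₂) :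
    R₂ ^ 4 + 3 * R₂ ^ 2 = -2 * k * (1 + 2 * k) := by
  obtain ⟨h₁, h₂⟩ := h
  linear_combination (4 * R₂ * c) * h₂ + (2 * k - R₂ ^ 2) * h₁ + (4 * R₂ ^ 2) * hck

theorem left_unique (hc : c ≠ 0) (hk : k ≠ 0) {R₁' : ℝ} (h : ReducedPeriodSystem c k R₁ R₂)
    (h' : ReducedPeriodSystem c k R₁' R₂) : R₁ = R₁' := by
  by_cases hR₂ : R₂ = 0
  · subst hR₂
    exact mul_right_cancel₀ hk (by linear_combination h.2 - h'.2)
  · exact mul_right_cancel₀ (mul_ne_zero (mul_ne_zero two_ne_zero hR₂) hc)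
      (by linear_combination h'.1 - h.1)

theorem iff_of_solution (hc : c ≠ 0) (hk : k ≠ 0) (hck : k = 2 * c ^ 2 - 1) {ρ₁ ρ₂ : ℝ}
    (hρ : ReducedPeriodSystem c k ρ₁ ρ₂) :
    ReducedPeriodSystem c k R₁ R₂ ↔ (R₁ = ρ₁ ∧ R₂ = ρ₂) ∨ (R₁ = -ρ₁ ∧ R₂ = -ρ₂) := by
  constructor
  · intro h
    rcases eq_or_eq_neg_of_pow_four_add_three_mul_sq_eq
      ((h.resolvent hck).trans (hρ.resolvent hck).symm) with rfl | rfl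
    · exact Or.inl ⟨h.left_unique hc hk hρ, rfl⟩
    · exact Or.inr ⟨h.left_unique hc hk hρ.neg, rfl⟩
  · rintro (⟨rfl, rfl⟩ | ⟨rfl, rfl⟩)
    · exact hρ
    · exact hρ.neg

/-- The explicit solution, in terms of `f = √(9 - 8k - 16k²)`. -/
theorem of_sq_eq (hc : c ≠ 0) (hk : k ≠ 0) (hck : k = 2 * c ^ 2 - 1) {f : ℝ}
    (hf : f ^ 2 = 9 - 8 * k - 16 * k ^ 2) (hR₂ : R₂ ^ 2 = (f - 3) / 2)
    (hR₁ : 8 * c * k * R₁ = -(f + 3 + 4 * k) * R₂) : ReducedPeriodSystem c k R₁ R₂ := by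
  constructor
  · refine mul_right_cancel₀ (mul_ne_zero four_ne_zero hk) ?_
    linear_combination (-R₂) * hR₁ + (f + 3) * hR₂ + (1 / 2) * hf
  · refine mul_right_cancel₀ (mul_ne_zero (mul_ne_zero (by norm_num : (8 : ℝ) ≠ 0) hc) hk) ?_
    linear_combination (k - R₂ ^ 2 / 2) * hR₁ - (8 * R₂ * k) * hck +
      (R₂ / 2 * (f + 3 + 4 * k)) * hR₂ + (R₂ / 4) * hf

end ReducedPeriodSystem

theorem cos_mem_Ico_of_mem_Ioc {x : ℝ} (hx : x ∈ Ioc (π / 2) (2 * π / 3)) :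
    cos x ∈ Ico (-1 / 2) 0 := by
  have hπ := pi_pos
  have hcos : cos (2 * π / 3) = -1 / 2 := by
    rw [show 2 * π / 3 = π - π / 3 by ring, cos_pi_sub, cos_pi_div_three]; ring
  refine ⟨hcos ▸ cos_le_cos_of_nonneg_of_le_pi (by linarith [hx.1]) (by linarith) hx.2, ?_⟩
  exact cos_neg_of_pi_div_two_lt_of_lt hx.1 (by linarith [hx.2])

theorem cos_two_mul_mem_Ico {θ : ℝ}
    (hθ : θ ∈ Ioc (π / 4) (π / 3) ∪ Ico (2 * π / 3) (3 * π / 4)) :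
    cos (2 * θ) ∈ Ico (-1 / 2) 0 := by
  rcases hθ with ⟨h₁, h₂⟩ | ⟨h₁, h₂⟩
  · exact cos_mem_Ico_of_mem_Ioc ⟨by linarith, by linarith⟩
  · rw [← cos_two_pi_sub]
    exact cos_mem_Ico_of_mem_Ioc ⟨by linarith, by linarith⟩

theorem reduced_system_solutions
    (θ : ℝ)
    (hθ : θ ∈ Set.Ioc (Real.pi / 4) (Real.pi / 3) ∪
      Set.Ico (2 * Real.pi / 3) (3 * Real.pi / 4))
    (f ρ₁ ρ₂ : ℝ)
    (hf : f = Real.sqrt (1 - 8 * Real.cos (2 * θ) - 8 * Real.cos (4 * θ)))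
    (hρ₁ : ρ₁ = (1 / (8 * Real.sqrt 2)) *
      (Real.sqrt (f - 3) / (Real.cos θ * Real.cos (2 * θ))) *
      (f + 3 + 4 * Real.cos (2 * θ)))
    (hρ₂ : ρ₂ = -Real.sqrt ((f - 3) / 2)) :
    1 - 8 * Real.cos (2 * θ) - 8 * Real.cos (4 * θ) ≥ 9 ∧
    ∀ R₁ R₂ : ℝ,
      (1 + 2 * Real.cos (2 * θ) - R₂ ^ 2 = 2 * R₁ * R₂ * Real.cos θ ∧
        2 * R₂ * Real.cos θ + R₁ * Real.cos (2 * θ) = (1 / 2) * R₁ * R₂ ^ 2) ↔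
      ((R₁ = ρ₁ ∧ R₂ = ρ₂) ∨ (R₁ = -ρ₁ ∧ R₂ = -ρ₂)) := by
  obtain ⟨hk₁, hk₀⟩ := cos_two_mul_mem_Ico hθ
  have hck : cos (2 * θ) = 2 * cos θ ^ 2 - 1 := cos_two_mul θ
  have hc : cos θ ≠ 0 := fun h ↦ by rw [h] at hck; linarith
  have hk : cos (2 * θ) ≠ 0 := hk₀.ne
  have h4 : 1 - 8 * cos (2 * θ) - 8 * cos (4 * θ) =
      9 - 8 * cos (2 * θ) - 16 * cos (2 * θ) ^ 2 := by
    rw [show 4 * θ = 2 * (2 * θ) by ring, cos_two_mul (2 * θ)]; ring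
  have hge : 1 - 8 * cos (2 * θ) - 8 * cos (4 * θ) ≥ 9 := by nlinarith
  have hfsq : f ^ 2 = 9 - 8 * cos (2 * θ) - 16 * cos (2 * θ) ^ 2 := by
    rw [hf, sq_sqrt (by linarith), h4]
  have hf3 : 3 ≤ f := hf ▸ (le_sqrt three_pos.le (by linarith)).2 (by linarith)
  have hρ₂sq : ρ₂ ^ 2 = (f - 3) / 2 := by rw [hρ₂, neg_sq, sq_sqrt (by linarith)]
  have hρ : 8 * cos θ * cos (2 * θ) * ρ₁ = -(f + 3 + 4 * cos (2 * θ)) * ρ₂ := by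
    rw [hρ₁, hρ₂, sqrt_div (by linarith)]
    field_simp
  exact ⟨hge, fun R₁ R₂ ↦ ReducedPeriodSystem.iff_of_solution hc hk hck
    (ReducedPeriodSystem.of_sq_eq hc hk hck hfsq hρ₂sq hρ)⟩
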